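/- arXiv:2310.09154 — 4 statements merged into one kernel-verified Lean document; each statement's English description precedes it below -/
import Mathlib

section
/- Let λ₁, …, λ_d be real numbers. Then all λ_i are nonnegative if and only if the m-th elementary symmetric polynomial e_m(λ₁, …, λ_d) is nonnegative for every m ∈ {1, …, d}. -/
/-- The `m`-th elementary symmetric polynomial of `x₁, …, x_d`. -/
noncomputable def esymmFun {d : ℕ} (m : ℕ) (x : Fin d → ℝ) : ℝ :=
  ∑ t ∈ Finset.powersetCard m Finset.univ, ∏ i ∈ t, x i

/-!
If some `λᵢ < 0`, put `t = -λᵢ > 0`. Then `∏ⱼ (λⱼ + t) = 0`, yet expanding the product gives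
`tᵈ + ∑_{m=1}^{d} e_m(λ) t^{d-m}`, which is positive when every `e_m(λ)` is nonnegative.
-/

open Finset

namespace esymmFun

variable {d : ℕ} {x : Fin d → ℝ}

@[simp]
theorem zero : esymmFun 0 x = 1 := by
  simp [esymmFun]

theorem nonneg_of_nonneg (hx : ∀ i, 0 ≤ x i) (m : ℕ) : 0 ≤ esymmFun m x :=
  sum_nonneg fun _ _ => prod_nonneg fun i _ => hx i

theorem prod_add_eq_sum (t : ℝ) :
    ∏ i, (x i + t) = ∑ m ∈ range (d + 1), esymmFun m x * t ^ (d - m) := by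
  rw [prod_add, sum_powerset, card_univ, Fintype.card_fin]
  refine sum_congr rfl fun m _ => ?_
  rw [esymmFun, sum_mul]
  refine sum_congr rfl fun s hs => ?_
  rw [mem_powersetCard] at hs
  rw [prod_const, card_sdiff_of_subset (subset_univ s), card_univ, Fintype.card_fin, hs.2]

theorem prod_add_pos (hx : ∀ m ∈ Icc 1 d, 0 ≤ esymmFun m x) {t : ℝ}
    (ht : 0 < t) : 0 < ∏ i, (x i + t) := by
  have hrange : range (d + 1) = insert 0 (Icc 1 d) := by
    ext m; simp only [mem_range, mem_insert, mem_Icc]; omega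
  rw [prod_add_eq_sum, hrange, sum_insert (by simp), zero, one_mul, Nat.sub_zero]
  exact add_pos_of_pos_of_nonneg (pow_pos ht d)
    (sum_nonneg fun m hm => mul_nonneg (hx m hm) (pow_nonneg ht.le _))

end esymmFun

/-- Real numbers `λ₁, …, λ_d` are all nonnegative if and only if
`e_m(λ₁, …, λ_d) ≥ 0` for every `m ∈ {1, …, d}`. -/
theorem nonneg_iff_esymm_nonneg {d : ℕ} (lam : Fin d → ℝ) :
    (∀ i, 0 ≤ lam i) ↔ ∀ m ∈ Finset.Icc 1 d, 0 ≤ esymmFun m lam := by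
  refine ⟨fun h m _ => esymmFun.nonneg_of_nonneg h m, fun h i => ?_⟩
  by_contra! hi
  have hpos := esymmFun.prod_add_pos h (neg_pos.mpr hi)
  have hzero : ∏ j, (lam j + -lam i) = 0 := prod_eq_zero (mem_univ i) (add_neg_cancel _)
  exact hpos.ne' hzero
end

section
/- A d × d Hermitian matrix A over ℂ is positive semidefinite if and only if S_m(A) ≥ 0 for every m ∈ {1, …, d}. -/
/-!
Newton's identities turn the recursion defining `S_m(A)` into the one satisfied by the elementary
symmetric polynomials `e_m` of the eigenvalues `λ_i` of `A`, so `S_m(A) = e_m(λ)`. If all `e_m(λ)`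
are nonnegative, then for `t > 0` the product `∏ (t + λ_i) = ∑ e_m(λ) t^(d-m)` is positive, so no
eigenvalue equals `-t`.
-/

open scoped ComplexOrder

/-- `Spoly A m` is the recursively defined quantity `S_m(A)`:
`S_0(A) = 1` and `S_m(A) = (1/m) ∑_{l=1}^m (-1)^(l-1) tr[A^l] S_{m-l}(A)`. -/
noncomputable def Spoly {d : ℕ} (A : Matrix (Fin d) (Fin d) ℂ) : ℕ → ℂ
  | 0 => 1
  | m + 1 => ((m : ℂ) + 1)⁻¹ *
      ∑ l ∈ Finset.range (m + 1), (-1 : ℂ) ^ l * (A ^ (l + 1)).trace * Spoly A (m - l)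

open Finset

namespace MvPolynomial

theorem mul_esymm_succ_eq_sum_range (σ : Type*) [Fintype σ] (R : Type*) [CommRing R] (m : ℕ) :
    (m + 1 : MvPolynomial σ R) * esymm σ R (m + 1) =
      ∑ l ∈ range (m + 1), (-1) ^ l * psum σ R (l + 1) * esymm σ R (m - l) := by
  have h := mul_esymm_eq_sum σ R (m + 1)
  rw [sum_filter, ← Nat.sum_antidiagonal_swap] at h
  simp only [Prod.fst_swap, Prod.snd_swap] at h
  rw [Nat.sum_antidiagonal_eq_sum_range_succ
    (fun i j => if j < m + 1 then (-1) ^ j * esymm σ R j * psum σ R i else 0),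
    sum_range_succ'] at h
  simp only [Nat.succ_sub_succ_eq_sub, tsub_zero, lt_irrefl, if_false, add_zero, mul_sum] at h
  push_cast at h
  rw [h]
  refine sum_congr rfl fun l hl => ?_
  have hl : l ≤ m := Nat.lt_succ_iff.mp (mem_range.mp hl)
  rw [if_pos (by omega)]
  have hsign : (-1 : MvPolynomial σ R) ^ (m + 1 + 1) * (-1) ^ (m - l) = (-1) ^ l := by
    rw [← pow_add, show m + 1 + 1 + (m - l) = 2 * (m - l + 1) + l by omega, pow_add, pow_mul,
      neg_one_sq, one_pow, one_mul]
  linear_combination (esymm σ R (m - l) * psum σ R (l + 1)) * hsign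

end MvPolynomial

namespace Multiset

variable {R : Type*}

theorem esymm_map_ringHom {S : Type*} [CommSemiring R] [CommSemiring S] (f : R →+* S)
    (s : Multiset R) (n : ℕ) : (s.map f).esymm n = f (s.esymm n) := by
  simp [esymm, powersetCard_map, map_multiset_sum, map_multiset_prod, map_map]

theorem prod_map_add_eq_sum_esymm [CommSemiring R] (s : Multiset R) (t : R) :
    (s.map (t + ·)).prod = ∑ j ∈ Finset.range (card s + 1), s.esymm j * t ^ (card s - j) := by
  simpa [Polynomial.eval_multiset_prod, Polynomial.eval_finsetSum] using
    congrArg (Polynomial.eval t) (prod_X_add_C_eq_sum_esymm s)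

variable [CommRing R] [LinearOrder R] [IsStrictOrderedRing R]

theorem esymm_nonneg {s : Multiset R} (hs : ∀ x ∈ s, 0 ≤ x) (n : ℕ) : 0 ≤ s.esymm n :=
  sum_nonneg fun _ ht ↦ by
    obtain ⟨u, hu, rfl⟩ := mem_map.mp ht
    exact prod_nonneg fun x hx ↦ hs x (subset_of_le (mem_powersetCard.mp hu).1 hx)

theorem prod_map_add_pos {s : Multiset R} (hs : ∀ m ∈ Finset.Icc 1 (card s), 0 ≤ s.esymm m)
    {t : R} (ht : 0 < t) : 0 < (s.map (t + ·)).prod := by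
  rw [prod_map_add_eq_sum_esymm, sum_range_succ']
  refine add_pos_of_nonneg_of_pos (Finset.sum_nonneg fun j hj ↦ ?_) ?_
  · have hj : j + 1 ∈ Finset.Icc 1 (card s) :=
      Finset.mem_Icc.mpr ⟨by omega, by simpa using Finset.mem_range.mp hj⟩
    exact mul_nonneg (hs _ hj) (pow_nonneg ht.le _)
  · simpa [esymm] using pow_pos ht _

theorem forall_nonneg_iff_esymm_nonneg (s : Multiset R) :
    (∀ x ∈ s, 0 ≤ x) ↔ ∀ m ∈ Finset.Icc 1 (card s), 0 ≤ s.esymm m := by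
  refine ⟨fun hs m _ ↦ esymm_nonneg hs m, fun hs x hx ↦ ?_⟩
  by_contra! hneg
  have hzero : (s.map (-x + ·)).prod = 0 := prod_eq_zero (mem_map.mpr ⟨x, hx, neg_add_cancel x⟩)
  exact (prod_map_add_pos hs (neg_pos.mpr hneg)).ne' hzero

end Multiset

theorem Matrix.IsHermitian.trace_pow {n 𝕜 : Type*} [Fintype n] [DecidableEq n] [RCLike 𝕜]
    {A : Matrix n n 𝕜} (hA : A.IsHermitian) (l : ℕ) :
    (A ^ l).trace = ∑ i, (hA.eigenvalues i : 𝕜) ^ l := by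
  conv_lhs => rw [hA.spectral_theorem, ← map_pow, Unitary.conjStarAlgAut_apply]
  rw [trace_mul_cycle, Unitary.coe_star_mul_self, Matrix.one_mul,
    diagonal_pow, trace_diagonal]
  rfl

theorem Spoly_eq_esymm {d : ℕ} (A : Matrix (Fin d) (Fin d) ℂ) {σ : Type*} [Fintype σ]
    (x : σ → ℂ) (hx : ∀ l, (A ^ l).trace = ∑ i, x i ^ l) (m : ℕ) :
    Spoly A m = (univ.val.map x).esymm m := by
  rw [← MvPolynomial.aeval_esymm_eq_multiset_esymm σ ℂ]
  induction m using Nat.strong_induction_on with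
  | _ m ih =>
    cases m with
    | zero => simp [Spoly]
    | succ m =>
      have hsum : ∑ l ∈ range (m + 1), (-1 : ℂ) ^ l * (A ^ (l + 1)).trace * Spoly A (m - l) =
          MvPolynomial.aeval x ((m + 1 : MvPolynomial σ ℂ) * MvPolynomial.esymm σ ℂ (m + 1)) := by
        rw [MvPolynomial.mul_esymm_succ_eq_sum_range, map_sum]
        refine sum_congr rfl fun l hl ↦ ?_
        simp [hx, ih (m - l) (by omega), MvPolynomial.psum]
      rw [Spoly, hsum, map_mul]
      simp [Nat.cast_add_one_ne_zero m]

theorem Matrix.IsHermitian.Spoly_eq {d : ℕ} {A : Matrix (Fin d) (Fin d) ℂ} (hA : A.IsHermitian)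
    (m : ℕ) : Spoly A m = ((univ.val.map hA.eigenvalues).esymm m : ℝ) := by
  rw [Spoly_eq_esymm A _ hA.trace_pow, ← Complex.ofRealHom_eq_coe, ← Multiset.esymm_map_ringHom,
    Multiset.map_map]
  rfl

/-- A `d × d` Hermitian matrix `A` is positive semidefinite if and only if
`S_m(A) ≥ 0` for every `m ∈ {1, …, d}`. -/
theorem posSemidef_iff_Spoly_nonneg {d : ℕ} (A : Matrix (Fin d) (Fin d) ℂ)
    (hA : A.IsHermitian) :
    A.PosSemidef ↔ ∀ m ∈ Finset.Icc 1 d, 0 ≤ Spoly A m := by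
  have hcard : Multiset.card (univ.val.map hA.eigenvalues) = d := by simp
  have heig : 0 ≤ hA.eigenvalues ↔ ∀ x ∈ univ.val.map hA.eigenvalues, 0 ≤ x := by
    simp [Pi.le_def]
  rw [hA.posSemidef_iff_eigenvalues_nonneg, heig,
    Multiset.forall_nonneg_iff_esymm_nonneg, hcard]
  simp only [hA.Spoly_eq, Complex.zero_le_real]
end

section
/- Let F be a nonempty closed set of d × d density matrices, let ρ be a d × d density matrix, and let 0 < s < R_F(ρ). Then there exists a family of Hermitian matrices (W̃_m)_{m=2}^{d}, where W̃_m has size d^m × d^m, such that: (i) tr[W̃_m · ρ^{⊗m}] < 0 for every m ∈ {2, …, d}, and (ii) for every σ ∈ F there exists m ∈ {2, …, d} with tr[W̃_m · σ^{⊗m}] ≥ 0. Here η^{⊗m} denotes the m-fold Kronecker power of η. -/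
/-!
Since `R_F(ρ) > 0`, `ρ ∉ F`, and as `F` is closed it stays at Hilbert–Schmidt distance at least
`ε > 0` from `ρ`. The quadratic function `σ ↦ tr (σ - ρ)² - ε²` is negative at `ρ` and nonnegative
on `F`; on trace-one matrices it is linear in `σ ⊗ σ`, namely
`tr[W (σ ⊗ σ)]` with `W = swap - ρ ⊗ 1 - 1 ⊗ ρ + (tr ρ² - ε²) 1 ⊗ 1`. Padding `W` with identity
factors gives the witness on `m ≥ 2` copies, and two distinct density matrices force `d ≥ 2`.
-/

open scoped ComplexOrder ENNReal

/-- A density matrix: positive semidefinite (hence Hermitian) with trace 1. -/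
def IsDensityMatrix {d : ℕ} (A : Matrix (Fin d) (Fin d) ℂ) : Prop :=
  A.PosSemidef ∧ A.trace = 1

/-- The generalized robustness `R_F(ρ)`, valued in the extended nonnegative reals:
the infimum of `s ≥ 0` such that `(ρ + sτ)/(1 + s) ∈ F` for some density matrix `τ`
(`+∞` if no such `s` exists). -/
noncomputable def Robustness {d : ℕ} (F : Set (Matrix (Fin d) (Fin d) ℂ))
    (ρ : Matrix (Fin d) (Fin d) ℂ) : ℝ≥0∞ :=
  ⨅ s ∈ {s : ℝ | 0 ≤ s ∧ ∃ τ, IsDensityMatrix τ ∧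
      ((1 : ℂ) + (s : ℂ))⁻¹ • (ρ + (s : ℂ) • τ) ∈ F}, ENNReal.ofReal s

/-- The `m`-fold Kronecker (tensor) power `η^{⊗m}` of a `d × d` matrix, realized as a
`d^m × d^m` matrix indexed by tuples `Fin m → Fin d`. -/
noncomputable def tensorPow {d : ℕ} (η : Matrix (Fin d) (Fin d) ℂ) (m : ℕ) :
    Matrix (Fin m → Fin d) (Fin m → Fin d) ℂ :=
  Matrix.of fun v w => ∏ i, η (v i) (w i)

namespace Matrix

variable {ι m n R : Type*} [Fintype ι]

def piKron [CommMonoid R] (B : ι → Matrix m n R) : Matrix (ι → m) (ι → n) R :=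
  of fun v w => ∏ i, B i (v i) (w i)

section CommSemiring

variable [CommSemiring R] [DecidableEq ι] [Fintype n]

theorem piKron_mul_piKron {p : Type*} (B : ι → Matrix m n R) (C : ι → Matrix n p R) :
    piKron B * piKron C = piKron fun i => B i * C i := by
  ext v w
  simp only [piKron, mul_apply, of_apply, ← Finset.prod_mul_distrib, Fintype.prod_sum]

theorem trace_piKron (B : ι → Matrix n n R) : (piKron B).trace = ∏ i, (B i).trace := by
  simp only [trace, diag, piKron, of_apply, Fintype.prod_sum]

end CommSemiring

theorem conjTranspose_piKron [CommMonoid R] [StarMul R] (B : ι → Matrix m n R) :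
    (piKron B)ᴴ = piKron fun i => (B i)ᴴ := by
  ext v w
  simp [piKron, conjTranspose_apply, star_prod]

end Matrix

open Matrix

theorem tensorPow_eq_piKron {d : ℕ} (η : Matrix (Fin d) (Fin d) ℂ) (m : ℕ) :
    tensorPow η m = piKron fun _ => η :=
  rfl

section Witness

variable {n : Type*} [DecidableEq n]

noncomputable def kronFirstTwo (m : ℕ) (B C : Matrix n n ℂ) :
    Matrix (Fin m → n) (Fin m → n) ℂ :=
  piKron fun k => if (k : ℕ) = 0 then B else if (k : ℕ) = 1 then C else 1

theorem conjTranspose_kronFirstTwo (m : ℕ) (B C : Matrix n n ℂ) :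
    (kronFirstTwo m B C)ᴴ = kronFirstTwo m Bᴴ Cᴴ := by
  simp only [kronFirstTwo, conjTranspose_piKron]
  congr! 2
  split_ifs <;> simp

theorem trace_kronFirstTwo_mul_tensorPow {d m : ℕ} (hm : 2 ≤ m)
    (B C σ : Matrix (Fin d) (Fin d) ℂ) (hσ : σ.trace = 1) :
    (kronFirstTwo m B C * tensorPow σ m).trace = (B * σ).trace * (C * σ).trace := by
  obtain ⟨k, rfl⟩ := Nat.exists_eq_add_of_le' hm
  rw [tensorPow_eq_piKron, kronFirstTwo, piKron_mul_piKron, trace_piKron, Fin.prod_univ_succ,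
    Fin.prod_univ_succ]
  simp [hσ]

variable [Fintype n]

/-- `∑ᵢⱼ Eⱼᵢ ⊗ Eᵢⱼ` is the swap operator, and `tr[swap (σ ⊗ σ)] = tr σ²`. -/
noncomputable def hsWitness (ρ : Matrix n n ℂ) (r : ℝ) (m : ℕ) :
    Matrix (Fin m → n) (Fin m → n) ℂ :=
  ∑ i, ∑ j, kronFirstTwo m (single j i 1) (single i j 1) - kronFirstTwo m ρ 1
    - kronFirstTwo m 1 ρ + ((ρ * ρ).trace - r) • kronFirstTwo m 1 1

theorem isHermitian_hsWitness {ρ : Matrix n n ℂ} (hρ : ρ.IsHermitian) (r : ℝ) (m : ℕ) :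
    (hsWitness ρ r m).IsHermitian := by
  have hc : star ((ρ * ρ).trace - r) = (ρ * ρ).trace - r := by
    rw [star_sub, ← trace_conjTranspose, conjTranspose_mul, hρ.eq, Complex.star_def,
      Complex.conj_ofReal]
  simp only [IsHermitian, hsWitness, conjTranspose_add, conjTranspose_sub, conjTranspose_smul,
    conjTranspose_sum, conjTranspose_kronFirstTwo, conjTranspose_single, star_one, hρ.eq,
    conjTranspose_one, hc]
  rw [Finset.sum_comm]

theorem trace_hsWitness_mul_tensorPow {d m : ℕ} (hm : 2 ≤ m) (ρ σ : Matrix (Fin d) (Fin d) ℂ)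
    (hσ : σ.trace = 1) (r : ℝ) :
    (hsWitness ρ r m * tensorPow σ m).trace = ((σ - ρ) * (σ - ρ)).trace - r := by
  have hσσ : (σ * σ).trace = ∑ i, ∑ j, σ i j * σ j i := rfl
  simp only [hsWitness, sub_mul, add_mul, smul_mul, Finset.sum_mul, trace_sub, trace_add,
    trace_smul, trace_sum, trace_kronFirstTwo_mul_tensorPow hm _ _ σ hσ, trace_single_mul,
    one_mul, hσ, smul_eq_mul, mul_one, mul_sub, sub_mul]
  rw [← hσσ, trace_mul_comm σ ρ]
  ring

end Witness

section Separation

attribute [local instance] Matrix.frobeniusNormedAddCommGroup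

variable {m n 𝕜 : Type*} [Fintype m] [Fintype n] [RCLike 𝕜]

theorem trace_conjTranspose_mul_self_eq_frobenius_norm_sq (A : Matrix m n 𝕜) :
    (Aᴴ * A).trace = ((‖A‖ ^ 2 : ℝ) : 𝕜) := by
  have hsum : ‖A‖ ^ 2 = ∑ i, ∑ j, ‖A i j‖ ^ 2 := by
    rw [frobenius_norm_def, ← Real.sqrt_eq_rpow, Real.sq_sqrt (by positivity)]
    simp only [Real.rpow_two]
  rw [hsum, Finset.sum_comm]
  simp [trace, mul_apply, RCLike.conj_mul]

theorem exists_pos_le_trace_of_notMem {F : Set (Matrix m n 𝕜)} (hF : IsClosed F)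
    {ρ : Matrix m n 𝕜} (hρ : ρ ∉ F) :
    ∃ r : ℝ, 0 < r ∧ ∀ σ ∈ F, (r : 𝕜) ≤ ((σ - ρ)ᴴ * (σ - ρ)).trace := by
  obtain ⟨ε, hε, hball⟩ := Metric.isOpen_iff.1 hF.isOpen_compl ρ hρ
  refine ⟨ε ^ 2, by positivity, fun σ hσ => ?_⟩
  have hεσ : ε ≤ ‖σ - ρ‖ := by
    rw [← dist_eq_norm]
    exact not_lt.1 fun h => hball (Metric.mem_ball.2 h) hσ
  rw [trace_conjTranspose_mul_self_eq_frobenius_norm_sq, RCLike.ofReal_le_ofReal]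
  exact pow_le_pow_left₀ hε.le hεσ 2

end Separation

theorem robustness_eq_zero_of_mem {d : ℕ} {F : Set (Matrix (Fin d) (Fin d) ℂ)}
    {ρ : Matrix (Fin d) (Fin d) ℂ} (hρ : IsDensityMatrix ρ) (hρF : ρ ∈ F) :
    Robustness F ρ = 0 :=
  nonpos_iff_eq_zero.1 <| iInf₂_le_of_le 0 ⟨le_rfl, ρ, hρ, by simpa using hρF⟩ (by simp)

theorem two_le_of_trace_eq_one_of_ne {d : ℕ} {σ ρ : Matrix (Fin d) (Fin d) ℂ}
    (hσ : σ.trace = 1) (hρ : ρ.trace = 1) (hne : σ ≠ ρ) : 2 ≤ d := by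
  by_contra! hd
  interval_cases d
  · simp [trace] at hσ
  · refine hne (Matrix.ext fun i j => ?_)
    simp only [trace, diag, Fin.sum_univ_one] at hσ hρ
    rw [Subsingleton.elim i 0, Subsingleton.elim j 0, hσ, hρ]

theorem exists_multicopy_witness_general {d : ℕ}
    (F : Set (Matrix (Fin d) (Fin d) ℂ)) (hFc : IsClosed F)
    (hF : ∀ σ ∈ F, IsDensityMatrix σ)
    (ρ : Matrix (Fin d) (Fin d) ℂ) (hρ : IsDensityMatrix ρ)
    (s : ℝ) (hsR : ENNReal.ofReal s < Robustness F ρ) :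
    ∃ W : (m : ℕ) → Matrix (Fin m → Fin d) (Fin m → Fin d) ℂ,
      (∀ m ∈ Finset.Icc 2 d, (W m).IsHermitian) ∧
      (∀ m ∈ Finset.Icc 2 d, (W m * tensorPow ρ m).trace < 0) ∧
      (∀ σ ∈ F, ∃ m ∈ Finset.Icc 2 d, 0 ≤ (W m * tensorPow σ m).trace) := by
  have hρF : ρ ∉ F := fun h => by simp [robustness_eq_zero_of_mem hρ h] at hsR
  obtain ⟨r, hr, hsep⟩ := exists_pos_le_trace_of_notMem hFc hρF
  refine ⟨hsWitness ρ r, fun m _ => isHermitian_hsWitness hρ.1.1 r m, fun m hm => ?_,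
    fun σ hσ => ⟨2, Finset.mem_Icc.2 ⟨le_rfl, ?_⟩, ?_⟩⟩
  · rw [trace_hsWitness_mul_tensorPow (Finset.mem_Icc.1 hm).1 ρ ρ hρ.2, sub_self, zero_mul,
      trace_zero, zero_sub, neg_lt_zero]
    exact_mod_cast hr
  · exact two_le_of_trace_eq_one_of_ne (hF σ hσ).2 hρ.2 (ne_of_mem_of_not_mem hσ hρF)
  · rw [trace_hsWitness_mul_tensorPow le_rfl ρ σ (hF σ hσ).2, sub_nonneg]
    have h := hsep σ hσ
    rwa [((hF σ hσ).1.1.sub hρ.1.1).eq] at h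

/-- For `0 < s < R_F(ρ)` there is a family of Hermitian operators `(W̃_m)_{m=2}^d`,
with `W̃_m` acting on the `m`-fold tensor power space, such that
`tr[W̃_m ρ^{⊗m}] < 0` for all `m ∈ {2, …, d}`, while every `σ ∈ F` has some
`m ∈ {2, …, d}` with `tr[W̃_m σ^{⊗m}] ≥ 0`. -/
theorem exists_multicopy_witness {d : ℕ}
    (F : Set (Matrix (Fin d) (Fin d) ℂ)) (hFne : F.Nonempty) (hFc : IsClosed F)
    (hF : ∀ σ ∈ F, IsDensityMatrix σ)
    (ρ : Matrix (Fin d) (Fin d) ℂ) (hρ : IsDensityMatrix ρ)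
    (s : ℝ) (hs : 0 < s) (hsR : ENNReal.ofReal s < Robustness F ρ) :
    ∃ W : (m : ℕ) → Matrix (Fin m → Fin d) (Fin m → Fin d) ℂ,
      (∀ m ∈ Finset.Icc 2 d, (W m).IsHermitian) ∧
      (∀ m ∈ Finset.Icc 2 d, (W m * tensorPow ρ m).trace < 0) ∧
      (∀ σ ∈ F, ∃ m ∈ Finset.Icc 2 d, 0 ≤ (W m * tensorPow σ m).trace) :=
  exists_multicopy_witness_general F hFc hF ρ hρ s hsR
end

section
/- Let F be a set of d × d density matrices, let ρ be a d × d density matrix, and let ε > 0 satisfy tr[(ρ − σ)²] ≥ ε for every σ ∈ F. Define W′ := V + (tr[ρ²] − ε)·(I ⊗ I) − 2·(ρ ⊗ I), where V is the swap operator on ℂ^d ⊗ ℂ^d. Then tr[W′ · (ρ ⊗ ρ)] < 0, while tr[W′ · (σ ⊗ σ)] ≥ 0 for every σ ∈ F. -/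
open Kronecker
open scoped ComplexOrder

/-- The swap operator `V` on `ℂ^d ⊗ ℂ^d`, with `V (u ⊗ v) = v ⊗ u`. -/
noncomputable def swapOp (d : ℕ) : Matrix (Fin d × Fin d) (Fin d × Fin d) ℂ :=
  Matrix.of fun p q => if p.1 = q.2 ∧ p.2 = q.1 then 1 else 0

lemma trace_swap_mul {d : ℕ} (A B : Matrix (Fin d) (Fin d) ℂ) :
    (swapOp d * (A ⊗ₖ B)).trace = (A * B).trace := by
  simp only [Matrix.trace, Matrix.diag, Matrix.mul_apply, swapOp, Matrix.of_apply,
    ite_mul, one_mul, zero_mul]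
  have h1 : ∀ p : Fin d × Fin d,
      (∑ q : Fin d × Fin d, if p.1 = q.2 ∧ p.2 = q.1 then (A ⊗ₖ B) q p else 0)
        = A p.2 p.1 * B p.1 p.2 := by
    intro p
    rw [Finset.sum_eq_single (p.2, p.1)]
    · simp [Matrix.kroneckerMap_apply]
    · rintro ⟨q1, q2⟩ _ hq
      simp only [ite_eq_right_iff, and_imp]
      intro h1 h2
      exact absurd (by simp [← h1, ← h2]) hq
    · intro h; exact absurd (Finset.mem_univ _) h
  simp only [h1, Fintype.sum_prod_type, Matrix.mul_apply]
  rw [Finset.sum_comm]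

lemma trace_kron_mul {d : ℕ} (A B C D : Matrix (Fin d) (Fin d) ℂ) :
    ((A ⊗ₖ B) * (C ⊗ₖ D)).trace = (A * C).trace * (B * D).trace := by
  rw [← Matrix.mul_kronecker_mul, Matrix.trace_kronecker]

/-- If `tr[(ρ − σ)²] ≥ ε > 0` for every `σ ∈ F`, then
`W′ = V + (tr[ρ²] − ε)(I ⊗ I) − 2(ρ ⊗ I)` satisfies `tr[W′ (ρ ⊗ ρ)] < 0` while
`tr[W′ (σ ⊗ σ)] ≥ 0` for every `σ ∈ F`. -/
theorem swap_witness_detects {d : ℕ} (F : Set (Matrix (Fin d) (Fin d) ℂ))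
    (hF : ∀ σ ∈ F, IsDensityMatrix σ)
    (ρ : Matrix (Fin d) (Fin d) ℂ) (hρ : IsDensityMatrix ρ)
    (ε : ℝ) (hε : 0 < ε)
    (hsep : ∀ σ ∈ F, (ε : ℂ) ≤ ((ρ - σ) * (ρ - σ)).trace)
    (W' : Matrix (Fin d × Fin d) (Fin d × Fin d) ℂ)
    (hW' : W' = swapOp d
      + ((ρ * ρ).trace - (ε : ℂ)) •
          ((1 : Matrix (Fin d) (Fin d) ℂ) ⊗ₖ (1 : Matrix (Fin d) (Fin d) ℂ))
      - (2 : ℂ) • (ρ ⊗ₖ (1 : Matrix (Fin d) (Fin d) ℂ))) :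
    (W' * (ρ ⊗ₖ ρ)).trace < 0 ∧ ∀ σ ∈ F, 0 ≤ (W' * (σ ⊗ₖ σ)).trace := by
  have key : ∀ σ : Matrix (Fin d) (Fin d) ℂ, σ.trace = 1 →
      (W' * (σ ⊗ₖ σ)).trace = ((ρ - σ) * (ρ - σ)).trace - (ε : ℂ) := by
    intro σ hσ
    subst hW'
    rw [Matrix.sub_mul, Matrix.add_mul, Matrix.smul_mul, Matrix.smul_mul,
      Matrix.trace_sub, Matrix.trace_add, Matrix.trace_smul, Matrix.trace_smul,
      trace_swap_mul, trace_kron_mul, trace_kron_mul]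
    simp only [Matrix.one_mul, hσ, hρ.2, mul_one, smul_eq_mul]
    rw [Matrix.sub_mul, Matrix.mul_sub, Matrix.mul_sub, Matrix.trace_sub,
      Matrix.trace_sub, Matrix.trace_sub, Matrix.trace_mul_comm σ ρ]
    ring
  constructor
  · rw [key ρ hρ.2]
    simp only [sub_self, Matrix.zero_mul, Matrix.trace_zero, zero_sub]
    rw [← Complex.ofReal_neg]
    exact_mod_cast neg_neg_of_pos (by exact_mod_cast hε)
  · intro σ hσ
    rw [key σ (hF σ hσ).2]
    exact sub_nonneg.mpr (hsep σ hσ)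
end
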